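/- arXiv:2504.21364 — 3 statements merged into one kernel-verified Lean document; each statement's English description precedes it below -/
import Mathlib

section
/- Let q ≥ 1 be an integer and υ > 0, τ > 0. Then for all real A, B ≥ 0: (A + τB)^(2q−1) ≤ e^((2q−2)υτ) · A^(2q−1) + τ·(τ^(2q−2) + (1 + (2/υ)^(2q−1)) e^((2q−2)τ)) · B^(2q−1). -/
/-!
With `λ = υτ/2`, write `A + τB` as the convex combination `a (A/a) + b (τB/b)` with weights
`a = 1/(1 + λ)`, `b = 1/(1 + 1/λ)`; convexity of `t ↦ t^(2q-1)` gives
`(A + τB)^(2q-1) ≤ (1 + λ)^(2q-2) A^(2q-1) + (1 + 1/λ)^(2q-2) (τB)^(2q-1)`.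
Then `(1 + λ)^(2q-2) ≤ exp((2q-2)υτ)` because `1 + x ≤ exp x`, while the second term equals
`τ (τ + 2/υ)^(2q-2) B^(2q-1)` and `τ + 2/υ ≤ max 1 (2/υ) · (1 + τ)`.
-/

open Real

theorem add_pow_succ_le_one_add_pow_mul_add_one_add_inv_pow_mul (n : ℕ) {l x y : ℝ}
    (hl : 0 < l) (hx : 0 ≤ x) (hy : 0 ≤ y) :
    (x + y) ^ (n + 1) ≤ (1 + l) ^ n * x ^ (n + 1) + (1 + l⁻¹) ^ n * y ^ (n + 1) := by
  have hweight (c z : ℝ) (hc : 0 < c) : c⁻¹ * (z / c⁻¹) ^ (n + 1) = c ^ n * z ^ (n + 1) := by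
    rw [div_inv_eq_mul, mul_pow, pow_succ c]; field_simp
  have hsum : (1 + l)⁻¹ + (1 + l⁻¹)⁻¹ = 1 := by field_simp; ring
  have hconv := (convexOn_pow (n + 1)).2 (Set.mem_Ici.2 (by positivity : 0 ≤ x / (1 + l)⁻¹))
    (Set.mem_Ici.2 (by positivity : 0 ≤ y / (1 + l⁻¹)⁻¹)) (by positivity) (by positivity) hsum
  simpa only [smul_eq_mul, mul_div_cancel₀ _ (by positivity : (1 + l)⁻¹ ≠ 0),
    mul_div_cancel₀ _ (by positivity : (1 + l⁻¹)⁻¹ ≠ 0), hweight (1 + l) x (by positivity),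
    hweight (1 + l⁻¹) y (by positivity)] using hconv

theorem one_add_pow_le_exp_mul (n : ℕ) {x : ℝ} (hx : -1 ≤ x) : (1 + x) ^ n ≤ exp (n * x) := by
  rw [exp_nat_mul]
  exact pow_le_pow_left₀ (by linarith) (by linarith [add_one_le_exp x]) n

theorem add_pow_le_one_add_pow_succ_mul_exp (m : ℕ) {t c : ℝ} (ht : 0 ≤ t) (hc : 0 ≤ c) :
    (t + c) ^ m ≤ (1 + c ^ (m + 1)) * exp (m * t) := by
  have hmax : max 1 c ^ m ≤ 1 + c ^ (m + 1) := by
    rcases le_total c 1 with h | h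
    · rw [max_eq_left h, one_pow]
      linarith [pow_nonneg hc (m + 1)]
    · rw [max_eq_right h]
      linarith [pow_le_pow_right₀ h (by omega : m ≤ m + 1)]
  have hsplit : t + c ≤ max 1 c * (1 + t) := by
    rcases le_total c 1 with h | h
    · rw [max_eq_left h]; linarith
    · rw [max_eq_right h]; nlinarith
  calc (t + c) ^ m ≤ (max 1 c * (1 + t)) ^ m := pow_le_pow_left₀ (by positivity) hsplit m
    _ = max 1 c ^ m * (1 + t) ^ m := mul_pow _ _ _
    _ ≤ (1 + c ^ (m + 1)) * exp (m * t) := by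
      gcongr
      exact one_add_pow_le_exp_mul m (by linarith)

theorem stmt1 (q : ℕ) (hq : 1 ≤ q) (υ τ : ℝ) (hυ : 0 < υ) (hτ : 0 < τ)
    (A B : ℝ) (hA : 0 ≤ A) (hB : 0 ≤ B) :
    (A + τ * B) ^ (2 * q - 1) ≤
      Real.exp ((2 * (q : ℝ) - 2) * υ * τ) * A ^ (2 * q - 1) +
      τ * (τ ^ (2 * q - 2) + (1 + (2 / υ) ^ (2 * q - 1)) * Real.exp ((2 * (q : ℝ) - 2) * τ)) *
        B ^ (2 * q - 1) := by
  obtain ⟨m, hm⟩ : ∃ m, 2 * q - 2 = m := ⟨_, rfl⟩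
  have hodd : 2 * q - 1 = m + 1 := by omega
  have hcast : 2 * (q : ℝ) - 2 = m := by
    rw [← hm, Nat.cast_sub (by omega)]; push_cast; ring
  rw [hodd, hm, hcast]
  have hA_coeff : (1 + υ * τ / 2) ^ m ≤ exp (m * υ * τ) :=
    calc (1 + υ * τ / 2) ^ m ≤ exp (m * (υ * τ / 2)) :=
          one_add_pow_le_exp_mul m (by linarith [mul_pos hυ hτ])
      _ ≤ exp (m * υ * τ) := exp_le_exp.2 (by nlinarith [mul_pos hυ hτ, m.cast_nonneg (α := ℝ)])
  have hB_term :
      (1 + (υ * τ / 2)⁻¹) ^ m * (τ * B) ^ (m + 1) = τ * (τ + 2 / υ) ^ m * B ^ (m + 1) := by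
    rw [show 1 + (υ * τ / 2)⁻¹ = (τ + 2 / υ) / τ by field_simp, div_pow, mul_pow, pow_succ τ]
    field_simp
  have hB_coeff : (τ + 2 / υ) ^ m ≤ τ ^ m + (1 + (2 / υ) ^ (m + 1)) * exp (m * τ) := by
    linarith [pow_nonneg hτ.le m,
      add_pow_le_one_add_pow_succ_mul_exp m hτ.le (c := 2 / υ) (by positivity)]
  calc (A + τ * B) ^ (m + 1)
      ≤ (1 + υ * τ / 2) ^ m * A ^ (m + 1) + (1 + (υ * τ / 2)⁻¹) ^ m * (τ * B) ^ (m + 1) :=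
        add_pow_succ_le_one_add_pow_mul_add_one_add_inv_pow_mul m (by positivity) hA (by positivity)
    _ ≤ exp (m * υ * τ) * A ^ (m + 1) +
        τ * (τ ^ m + (1 + (2 / υ) ^ (m + 1)) * exp (m * τ)) * B ^ (m + 1) := by
      rw [hB_term]
      gcongr
end

section
/- Fix constants c₀ > 0, β > 0, α ∈ (0,1], and define Υ(x) := (−c₀ x − (c₀/2) β^α x²) / (1 + β x^(1/α))^(2α) for x ≥ 0. Then sup_{x ≥ 1} Υ(x) ≤ max( Υ(1), lim_{x→∞} Υ(x) ), where Υ(1) = (−c₀ − (c₀/2) β^α)/(1 + β)^(2α) and lim_{x→∞} Υ(x) = −c₀/(2 β^α). In particular sup_{x≥1} Υ(x) ≤ −c₀ / (2 (1 + β)^(2α)) whenever β ≤ β₀ for a fixed β₀ with (1+β)^(2α) ≤ (1+β₀)^(2α). -/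
/-!
Writing `w = 1 + β x^{1/α}`, one computes
`Υ'(x) = c₀ (β x^{1/α} - β^α x - 1) w^{2α-1} / w^{4α}`, and the bracket is the paper's `Λ(y)`
at `y = β^α x`. Since `1/α ≥ 1`, the bracket divided by `x`, namely `β x^{1/α-1} - β^α - 1/x`,
is increasing, so `Υ'` changes sign at most once, from `-` to `+`. Hence on `[1, ∞)` the function
`Υ` is either decreasing up to `x` or increasing from `x` on, and `Υ x` is bounded by `Υ 1` or
by the limit at infinity. Dividing numerator and denominator by `x²` gives that limit.
-/

open Real Filter Set Topology

noncomputable def Upsilon (c₀ β α : ℝ) (x : ℝ) : ℝ :=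
  (-c₀ * x - c₀ / 2 * β ^ α * x ^ 2) / (1 + β * x ^ (1 / α)) ^ (2 * α)

theorem le_max_of_antitoneOn_Icc_or_monotoneOn_Ici {f : ℝ → ℝ} {a x L : ℝ}
    (hlim : Tendsto f atTop (𝓝 L)) (hax : a ≤ x)
    (h : AntitoneOn f (Icc a x) ∨ MonotoneOn f (Ici x)) :
    f x ≤ max (f a) L := by
  rcases h with hanti | hmono
  · exact (hanti ⟨le_rfl, hax⟩ ⟨hax, le_rfl⟩ hax).trans (le_max_left _ _)
  · refine (ge_of_tendsto hlim ?_).trans (le_max_right _ _)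
    filter_upwards [eventually_ge_atTop x] with t ht
    exact hmono self_mem_Ici ht ht

theorem antitoneOn_Icc_or_monotoneOn_Ici_of_deriv {f q : ℝ → ℝ} {a x : ℝ}
    (hf : DifferentiableOn ℝ f (Ici a)) (hq : MonotoneOn q (Ici a))
    (hneg : ∀ t ∈ Ioi a, q t ≤ 0 → deriv f t ≤ 0)
    (hpos : ∀ t ∈ Ioi a, 0 ≤ q t → 0 ≤ deriv f t) (hax : a ≤ x) :
    AntitoneOn f (Icc a x) ∨ MonotoneOn f (Ici x) := by
  rcases le_or_gt (q x) 0 with hqx | hqx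
  · left
    refine antitoneOn_of_deriv_nonpos (convex_Icc a x) (hf.continuousOn.mono Icc_subset_Ici_self)
      (hf.mono (interior_subset.trans Icc_subset_Ici_self)) fun t ht => ?_
    rw [interior_Icc] at ht
    exact hneg t ht.1 ((hq (mem_Ici.2 ht.1.le) (mem_Ici.2 hax) ht.2.le).trans hqx)
  · right
    have hsub : Ici x ⊆ Ici a := Ici_subset_Ici.2 hax
    refine monotoneOn_of_deriv_nonneg (convex_Ici x) (hf.continuousOn.mono hsub)
      (hf.mono (interior_subset.trans hsub)) fun t ht => ?_
    rw [interior_Ici] at ht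
    exact hpos t (hax.trans_lt ht)
      (hqx.le.trans (hq (mem_Ici.2 hax) (hsub (mem_Ici.2 ht.le)) ht.le))

theorem monotoneOn_mul_rpow_sub_mul_sub_one_div {b c p : ℝ} (hb : 0 ≤ b) (hp : 1 ≤ p) :
    MonotoneOn (fun x => (b * x ^ p - c * x - 1) / x) (Ioi 0) := by
  intro x hx y hy hxy
  have hx0 : x ≠ 0 := (mem_Ioi.1 hx).ne'
  have hy0 : y ≠ 0 := (mem_Ioi.1 hy).ne'
  have hsplit : ∀ z : ℝ, z ≠ 0 → (b * z ^ p - c * z - 1) / z = b * z ^ (p - 1) - c - z⁻¹ := by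
    intro z hz
    rw [rpow_sub_one hz]
    field_simp
  have hpow : x ^ (p - 1) ≤ y ^ (p - 1) :=
    rpow_le_rpow (mem_Ioi.1 hx).le hxy (by linarith)
  have hinv : y⁻¹ ≤ x⁻¹ := inv_anti₀ hx hxy
  simp only [hsplit x hx0, hsplit y hy0]
  nlinarith [mul_le_mul_of_nonneg_left hpow hb]

theorem Upsilon_one (c₀ β α : ℝ) :
    Upsilon c₀ β α 1 = (-c₀ - c₀ / 2 * β ^ α) / (1 + β) ^ (2 * α) := by
  simp [Upsilon]

theorem hasDerivAt_Upsilon {c₀ β α x : ℝ} (hβ : 0 ≤ β) (hα : 0 < α) (hx : 0 < x) :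
    HasDerivAt (Upsilon c₀ β α)
      (c₀ * (β * x ^ (1 / α) - β ^ α * x - 1) * (1 + β * x ^ (1 / α)) ^ (2 * α - 1)
        / ((1 + β * x ^ (1 / α)) ^ (2 * α)) ^ 2) x := by
  have hw : 0 < 1 + β * x ^ (1 / α) := by positivity
  have hnum : HasDerivAt (fun x : ℝ => -c₀ * x - c₀ / 2 * β ^ α * x ^ 2)
      (-c₀ - c₀ / 2 * β ^ α * (2 * x)) x := by
    refine HasDerivAt.sub ?_ ?_
    · simpa only [mul_one] using (hasDerivAt_id' x).const_mul (-c₀)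
    · simpa using (hasDerivAt_pow 2 x).const_mul (c₀ / 2 * β ^ α)
  have hden : HasDerivAt (fun x : ℝ => 1 + β * x ^ (1 / α))
      (β * (1 / α * x ^ (1 / α - 1))) x :=
    ((hasDerivAt_rpow_const (Or.inl hx.ne')).const_mul β).const_add 1
  refine (hnum.div (hden.rpow_const (p := 2 * α) (Or.inl hw.ne')) (by positivity)).congr_deriv ?_
  rw [rpow_sub_one hx.ne', rpow_sub_one hw.ne']
  field_simp
  ring

theorem Upsilon_eq_of_pos (c₀ : ℝ) {β α x : ℝ} (hβ : 0 ≤ β) (hα : 0 < α) (hx : 0 < x) :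
    Upsilon c₀ β α x = (-c₀ / x - c₀ / 2 * β ^ α) / (x ^ (-(1 / α)) + β) ^ (2 * α) := by
  have hfac : 1 + β * x ^ (1 / α) = x ^ (1 / α) * (x ^ (-(1 / α)) + β) := by
    rw [mul_add, ← rpow_add hx]
    simp [mul_comm]
  have hden : (1 + β * x ^ (1 / α)) ^ (2 * α) = x ^ 2 * (x ^ (-(1 / α)) + β) ^ (2 * α) := by
    rw [hfac, mul_rpow (by positivity) (by positivity), ← rpow_mul hx.le,
      show 1 / α * (2 * α) = ((2 : ℕ) : ℝ) by field_simp; norm_num, rpow_natCast]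
  rw [Upsilon, hden]
  field_simp

theorem tendsto_Upsilon_atTop {c₀ β α : ℝ} (hβ : 0 < β) (hα : 0 < α) :
    Tendsto (Upsilon c₀ β α) atTop (𝓝 (-c₀ / (2 * β ^ α))) := by
  have hnum : Tendsto (fun x : ℝ => -c₀ / x - c₀ / 2 * β ^ α) atTop
      (𝓝 (0 - c₀ / 2 * β ^ α)) :=
    (tendsto_const_nhds.div_atTop tendsto_id).sub_const _
  have hden : Tendsto (fun x : ℝ => (x ^ (-(1 / α)) + β) ^ (2 * α)) atTop
      (𝓝 ((0 + β) ^ (2 * α))) :=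
    ((tendsto_rpow_neg_atTop (by positivity)).add_const β).rpow_const
      (Or.inl (by simpa using hβ.ne'))
  have hlim : (0 - c₀ / 2 * β ^ α) / (0 + β) ^ (2 * α) = -c₀ / (2 * β ^ α) := by
    rw [zero_add, mul_comm 2 α, rpow_mul hβ.le, rpow_two]
    have : 0 < β ^ α := by positivity
    field_simp
    ring
  rw [← hlim]
  refine (hnum.div hden (rpow_pos_of_pos (by simpa using hβ) _).ne').congr' ?_
  filter_upwards [eventually_gt_atTop 0] with x hx
  exact (Upsilon_eq_of_pos c₀ hβ.le hα hx).symm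

theorem Upsilon_antitoneOn_Icc_or_monotoneOn_Ici {c₀ β α x : ℝ} (hc₀ : 0 < c₀) (hβ : 0 < β)
    (hα0 : 0 < α) (hα1 : α ≤ 1) (hx : 1 ≤ x) :
    AntitoneOn (Upsilon c₀ β α) (Icc 1 x) ∨ MonotoneOn (Upsilon c₀ β α) (Ici x) := by
  have hderiv : ∀ t ∈ Ioi (0 : ℝ), HasDerivAt (Upsilon c₀ β α) _ t :=
    fun t ht => hasDerivAt_Upsilon hβ.le hα0 ht
  have hq := monotoneOn_mul_rpow_sub_mul_sub_one_div (c := β ^ α) hβ.le (one_le_one_div hα0 hα1)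
  refine antitoneOn_Icc_or_monotoneOn_Ici_of_deriv
    (fun t ht =>
      (hderiv t (Ici_subset_Ioi.2 zero_lt_one ht)).differentiableAt.differentiableWithinAt)
    (hq.mono (Ici_subset_Ioi.2 zero_lt_one)) (fun t ht hqt => ?_) (fun t ht hqt => ?_) hx
  all_goals
    have ht0 : 0 < t := zero_lt_one.trans ht
    have hw : 0 < 1 + β * t ^ (1 / α) := by positivity
    rw [(hderiv t ht0).deriv]
  · have hΛ : β * t ^ (1 / α) - β ^ α * t - 1 ≤ 0 := by simpa using (div_le_iff₀ ht0).1 hqt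
    exact div_nonpos_of_nonpos_of_nonneg
      (mul_nonpos_of_nonpos_of_nonneg (mul_nonpos_of_nonneg_of_nonpos hc₀.le hΛ) (by positivity))
      (by positivity)
  · have hΛ : 0 ≤ β * t ^ (1 / α) - β ^ α * t - 1 := by simpa using (le_div_iff₀ ht0).1 hqt
    positivity

theorem max_Upsilon_one_le {c₀ β α β₀ : ℝ} (hc₀ : 0 < c₀) (hβ : 0 < β) (hα : 0 < α)
    (hββ₀ : β ≤ β₀) :
    max (Upsilon c₀ β α 1) (-c₀ / (2 * β ^ α)) ≤ -c₀ / (2 * (1 + β₀) ^ (2 * α)) := by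
  have hβα : 0 < β ^ α := by positivity
  have hA : 0 < (1 + β) ^ (2 * α) := by positivity
  have hAB : (1 + β) ^ (2 * α) ≤ (1 + β₀) ^ (2 * α) := by gcongr
  have hβB : β ^ α ≤ (1 + β₀) ^ (2 * α) :=
    calc β ^ α ≤ (1 + β₀) ^ α := by gcongr; linarith
      _ ≤ (1 + β₀) ^ (2 * α) := rpow_le_rpow_of_exponent_le (by linarith) (by linarith)
  have hneg_div_le : ∀ {a b : ℝ}, 0 < a → a ≤ b → -c₀ / a ≤ -c₀ / b := fun ha hab => by
    rw [neg_div, neg_div, neg_le_neg_iff]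
    exact div_le_div_of_nonneg_left hc₀.le ha hab
  refine max_le ?_ (hneg_div_le (by positivity) (by linarith))
  calc Upsilon c₀ β α 1 = (-c₀ - c₀ / 2 * β ^ α) / (1 + β) ^ (2 * α) := Upsilon_one c₀ β α
    _ ≤ -c₀ / (1 + β) ^ (2 * α) := div_le_div_of_nonneg_right (by nlinarith) hA.le
    _ ≤ -c₀ / (2 * (1 + β₀) ^ (2 * α)) := hneg_div_le hA (by linarith)

theorem stmt6 (c₀ β α : ℝ) (hc₀ : 0 < c₀) (hβ : 0 < β) (hα0 : 0 < α) (hα1 : α ≤ 1) :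
    (∀ x : ℝ, 1 ≤ x → Upsilon c₀ β α x ≤
        max (Upsilon c₀ β α 1) (-c₀ / (2 * β ^ α))) ∧
    Upsilon c₀ β α 1 = (-c₀ - c₀ / 2 * β ^ α) / (1 + β) ^ (2 * α) ∧
    Filter.Tendsto (Upsilon c₀ β α) Filter.atTop (nhds (-c₀ / (2 * β ^ α))) ∧
    (∀ β₀ : ℝ, 0 < β₀ → β ≤ β₀ →
      ∀ x : ℝ, 1 ≤ x → Upsilon c₀ β α x ≤ -c₀ / (2 * (1 + β₀) ^ (2 * α))) := by
  have hlim := tendsto_Upsilon_atTop (c₀ := c₀) hβ hα0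
  have hbound : ∀ x : ℝ, 1 ≤ x → Upsilon c₀ β α x ≤
      max (Upsilon c₀ β α 1) (-c₀ / (2 * β ^ α)) := fun x hx =>
    le_max_of_antitoneOn_Icc_or_monotoneOn_Ici hlim hx
      (Upsilon_antitoneOn_Icc_or_monotoneOn_Ici hc₀ hβ hα0 hα1 hx)
  exact ⟨hbound, Upsilon_one c₀ β α, hlim, fun β₀ _ hββ₀ x hx =>
    (hbound x hx).trans (max_Upsilon_one_le hc₀ hβ hα0 hββ₀)⟩
end

section
/- Let q ≥ 1 be an integer and c̃₀, c̃₁ > 0. Suppose g: ℝ → ℝ satisfies, for all u, v ∈ ℝ and some τ > 0: 2(u+v) g(u) + τ |g(u)|² ≤ −2c̃₀ |u|² + 2c̃₁(1 + |v|^(2q)). Then for all y, r ∈ ℝ with τ c̃₀ ≤ 1: |y + τ g(y + r)|² ≤ e^(−c̃₀ τ) |y|² + 2(c̃₀ + c̃₁) τ (1 + |r|^(2q)). -/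
theorem stmt15 (q : ℕ) (hq : 1 ≤ q) (c₀ c₁ τ : ℝ) (hc₀ : 0 < c₀) (hc₁ : 0 < c₁)
    (hτ : 0 < τ) (hstep : τ * c₀ ≤ 1) (g : ℝ → ℝ)
    (hg : ∀ u v : ℝ, 2 * (u + v) * g u + τ * |g u| ^ 2 ≤
      -2 * c₀ * |u| ^ 2 + 2 * c₁ * (1 + |v| ^ (2 * q))) :
    ∀ y r : ℝ, |y + τ * g (y + r)| ^ 2 ≤
      Real.exp (-c₀ * τ) * |y| ^ 2 + 2 * (c₀ + c₁) * τ * (1 + |r| ^ (2 * q)) := by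
  intro y r
  have h := hg (y + r) (-r)
  rw [abs_neg] at h
  have hsq : ∀ x : ℝ, |x| ^ 2 = x ^ 2 := fun x => sq_abs x
  rw [hsq, hsq] at h
  rw [hsq, hsq]
  have hr2 : r ^ 2 ≤ 1 + |r| ^ (2 * q) := by
    rcases le_or_gt (|r|) 1 with hle | hlt
    · have : r ^ 2 = |r| ^ 2 := (sq_abs r).symm
      nlinarith [pow_le_one₀ (abs_nonneg r) hle (n := 2), pow_nonneg (abs_nonneg r) (2 * q)]
    · have h1 : |r| ^ 2 ≤ |r| ^ (2 * q) :=
        pow_le_pow_right₀ hlt.le (by omega)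
      nlinarith [sq_abs r]
  have hexp : 1 - c₀ * τ ≤ Real.exp (-c₀ * τ) := by
    have := Real.add_one_le_exp (-c₀ * τ)
    linarith
  have hy2 : 0 ≤ y ^ 2 := sq_nonneg y
  have hrq : 0 ≤ |r| ^ (2 * q) := pow_nonneg (abs_nonneg r) _
  have h1 := mul_le_mul_of_nonneg_left h hτ.le
  have h2 := mul_le_mul_of_nonneg_right hexp hy2
  have h3 : 0 ≤ τ * c₀ * (y + 2 * r) ^ 2 :=
    mul_nonneg (mul_pos hτ hc₀).le (sq_nonneg _)
  have h4 := mul_le_mul_of_nonneg_left hr2 (mul_pos hτ hc₀).le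
  nlinarith [mul_pos hτ hc₁, hrq]
end
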